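/- arXiv:2004.03795 — 2 statements merged into one kernel-verified Lean document; each statement's English description precedes it below -/
import Mathlib

section
/- (Quasi-Bernoulli property.) Assume hypothesis (H2) and fix λ ∈ ℝ and C₀ ≥ 1. Suppose μ is a Borel probability measure on X such that C₀^{−1} ≤ μ([x_0,…,x_{n−1}]) · q^n Z_n(λ)/exp(λ S_n f(x)) ≤ C₀ for all n ≥ 1 and x ∈ X, and suppose that for each n ≥ 1, ν_n is a Borel probability measure on X such that C₀^{−1} ≤ ν_n([y_0,…,y_{m−1}]) · q^m Z_{n,n+m}(λ)/exp(λ Σ_{k=0}^{m−1} f_{n+k}(T^k y)) ≤ C₀ for all m ≥ 1 and y ∈ X. Then there is a constant C ≥ 1 (depending only on C₀, λ and the constant in (H2)) such that for all n, m ≥ 1 and all words I ∈ S^n, J ∈ S^m, C^{−1} μ([I]) ν_n([J]) ≤ μ([IJ]) ≤ C μ([I]) ν_n([J]), where IJ denotes the concatenated word. -/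
/-
Take a point `z` of the cylinder `[IJ]`. The Birkhoff sum splits exactly,
`S_{n+m} f(z) = S_n f(z) + Σ_{k<m} f_{n+k}(T^k (T^n z))`, so the Gibbs bounds for `μ` at times
`n` and `n + m` and for `ν_n` at time `m` (at the point `T^n z`) give
`μ[IJ] · q^{n+m} Z_{n+m} ≍ μ[I] ν_n[J] · q^n Z_n · q^m Z_{n,n+m}` up to the factor `C₀³`.
Summing over `J` (`Σ_J μ[IJ] = μ[I]`, `Σ_J ν_n[J] = 1`) turns this into
`q^{n+m} Z_{n+m} ≍ q^n Z_n · q^m Z_{n,n+m}`, and substituting that back gives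
`μ[IJ] ≍ μ[I] ν_n[J]` up to `C₀⁶`.
-/

open MeasureTheory Filter Finset
open scoped ENNReal Topology

noncomputable section

/-- The shift map `T` on `ℕ → S`, `(Tx)_n = x_{n+1}`. -/
def shift {S : Type*} (x : ℕ → S) : ℕ → S := fun n => x (n + 1)

/-- The cylinder `[a_0, …, a_{m-1}]` of all `y` with `y_i = a_i` for `0 ≤ i < m`. -/
def cyl {S : Type*} {m : ℕ} (a : Fin m → S) : Set (ℕ → S) :=
  {y : ℕ → S | ∀ i : Fin m, y i = a i}

/-- The partial weighted Birkhoff sum `S_{m,n} f(x) = ∑_{k=m}^{n-1} f_k(T^k x)`. -/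
def birk {S : Type*} (f : ℕ → (ℕ → S) → ℝ) (m n : ℕ) (x : ℕ → S) : ℝ :=
  ∑ k ∈ Finset.Ico m n, f k (shift^[k] x)

/-- The partition function `Z_{m,n}(λ) = ∫ exp(λ S_{m,n}f) dσ`. -/
def Zmn {S : Type*} [MeasurableSpace S] (σ : Measure (ℕ → S))
    (f : ℕ → (ℕ → S) → ℝ) (lam : ℝ) (m n : ℕ) : ℝ :=
  ∫ x, Real.exp (lam * birk f m n x) ∂σ

/-- Hypothesis (H2): uniformly bounded distortion. -/
def H2 {S : Type*} (f : ℕ → (ℕ → S) → ℝ) (D : ℝ) : Prop :=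
  ∀ N : ℕ, 1 ≤ N → ∀ x y : ℕ → S, (∀ i, i < N → x i = y i) →
    ∑ k ∈ Finset.range N, |f k (shift^[k] x) - f k (shift^[k] y)| ≤ D

def Comparable {α : Type*} [Field α] [LinearOrder α] (C a b : α) : Prop :=
  C⁻¹ * b ≤ a ∧ a ≤ C * b

namespace Comparable

variable {α : Type*} [Field α] [LinearOrder α] [IsStrictOrderedRing α] {C C' a b c a' b' : α}

theorem of_le_div_le (h : C⁻¹ ≤ a / b ∧ a / b ≤ C) (hb : 0 < b) : Comparable C a b :=
  ⟨(le_div_iff₀ hb).mp h.1, (div_le_iff₀ hb).mp h.2⟩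

theorem pos (h : Comparable C a b) (hC : 0 < C) (hb : 0 < b) : 0 < a :=
  (mul_pos (inv_pos.mpr hC) hb).trans_le h.1

theorem symm (h : Comparable C a b) (hC : 0 < C) : Comparable C b a := by
  constructor
  · calc C⁻¹ * a ≤ C⁻¹ * (C * b) := by gcongr; exact h.2
      _ = b := inv_mul_cancel_left₀ hC.ne' b
  · calc b = C * (C⁻¹ * b) := (mul_inv_cancel_left₀ hC.ne' b).symm
      _ ≤ C * a := by gcongr; exact h.1

theorem trans (h : Comparable C a b) (h' : Comparable C' b c) (hC : 0 ≤ C) :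
    Comparable (C * C') a c := by
  constructor
  · calc (C * C')⁻¹ * c = C⁻¹ * (C'⁻¹ * c) := by rw [mul_inv, mul_assoc]
      _ ≤ C⁻¹ * b := by gcongr; exact h'.1
      _ ≤ a := h.1
  · calc a ≤ C * b := h.2
      _ ≤ C * (C' * c) := by gcongr; exact h'.2
      _ = C * C' * c := (mul_assoc _ _ _).symm

theorem nonneg (h : Comparable C a b) (hC : 0 ≤ C) (hb : 0 ≤ b) : 0 ≤ a :=
  (mul_nonneg (inv_nonneg.mpr hC) hb).trans h.1

theorem mul (h : Comparable C a b) (h' : Comparable C' a' b') (hC : 0 ≤ C) (hC' : 0 ≤ C')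
    (hb : 0 ≤ b) (hb' : 0 ≤ b') : Comparable (C * C') (a * a') (b * b') := by
  constructor
  · calc (C * C')⁻¹ * (b * b') = (C⁻¹ * b) * (C'⁻¹ * b') := by rw [mul_inv]; ring
      _ ≤ a * a' := mul_le_mul h.1 h'.1 (by positivity) (h.nonneg hC hb)
  · calc a * a' ≤ (C * b) * (C' * b') := mul_le_mul h.2 h'.2 (h'.nonneg hC' hb') (by positivity)
      _ = C * C' * (b * b') := by ring

theorem mul_left (h : Comparable C a b) (hc : 0 ≤ c) : Comparable C (c * a) (c * b) :=
  ⟨by rw [mul_left_comm]; exact mul_le_mul_of_nonneg_left h.1 hc,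
   by rw [mul_left_comm]; exact mul_le_mul_of_nonneg_left h.2 hc⟩

theorem of_mul_left (h : Comparable C (c * a) (c * b)) (hc : 0 < c) : Comparable C a b :=
  ⟨le_of_mul_le_mul_left (by rw [mul_left_comm]; exact h.1) hc,
   le_of_mul_le_mul_left (by rw [mul_left_comm]; exact h.2) hc⟩

theorem of_mul_right (h : Comparable C (a * c) (b * c)) (hc : 0 < c) : Comparable C a b := by
  rw [mul_comm a, mul_comm b] at h
  exact h.of_mul_left hc

theorem sum {ι : Type*} {s : Finset ι} {f g : ι → α} (h : ∀ i ∈ s, Comparable C (f i) (g i)) :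
    Comparable C (∑ i ∈ s, f i) (∑ i ∈ s, g i) := by
  constructor
  · rw [Finset.mul_sum]; exact Finset.sum_le_sum fun i hi => (h i hi).1
  · rw [Finset.mul_sum]; exact Finset.sum_le_sum fun i hi => (h i hi).2

end Comparable

section Cylinders

variable {S : Type*}

theorem shift_iterate_apply (k : ℕ) (x : ℕ → S) (i : ℕ) : shift^[k] x i = x (i + k) := by
  induction k generalizing x with
  | zero => rfl
  | succ k ih => rw [Function.iterate_succ_apply, ih]; rfl

theorem cyl_eq_preimage {m : ℕ} (a : Fin m → S) : cyl a = (fun y (i : Fin m) => y i) ⁻¹' {a} := by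
  ext y; simp [cyl, funext_iff]

theorem mem_cyl_append {n m : ℕ} (I : Fin n → S) (J : Fin m → S) (y : ℕ → S) :
    y ∈ cyl (Fin.append I J) ↔ y ∈ cyl I ∧ shift^[n] y ∈ cyl J := by
  simp [cyl, Fin.forall_fin_add, shift_iterate_apply, add_comm]

theorem cyl_append {n m : ℕ} (I : Fin n → S) (J : Fin m → S) :
    cyl (Fin.append I J) = cyl I ∩ shift^[n] ⁻¹' cyl J :=
  Set.ext (mem_cyl_append I J)

theorem cyl_nonempty [Nonempty S] {m : ℕ} (a : Fin m → S) : (cyl a).Nonempty :=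
  ⟨fun i => if h : i < m then a ⟨i, h⟩ else Classical.arbitrary S, fun i => by simp⟩

variable [MeasurableSpace S]

theorem measurable_shift : Measurable (shift : (ℕ → S) → ℕ → S) :=
  measurable_pi_lambda _ fun i => measurable_pi_apply (i + 1)

variable [TopologicalSpace S] [DiscreteTopology S] [BorelSpace S]

theorem measurableSet_cyl {m : ℕ} (a : Fin m → S) : MeasurableSet (cyl a) := by
  rw [cyl_eq_preimage]
  exact measurable_pi_lambda _ (fun i => measurable_pi_apply _) (measurableSet_singleton a)

variable [Fintype S]

theorem sum_measure_cyl (ρ : Measure (ℕ → S)) (m : ℕ) :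
    ∑ J : Fin m → S, ρ (cyl J) = ρ Set.univ := by
  simp_rw [cyl_eq_preimage]
  rw [sum_measure_preimage_singleton _ fun J _ => cyl_eq_preimage J ▸ measurableSet_cyl J]
  simp

theorem measure_cyl_eq_sum_append (ρ : Measure (ℕ → S)) {n : ℕ} (I : Fin n → S) (m : ℕ) :
    ρ (cyl I) = ∑ J : Fin m → S, ρ (cyl (Fin.append I J)) := by
  have hT := (measurable_shift (S := S)).iterate n
  calc ρ (cyl I) = (ρ.restrict (cyl I)).map shift^[n] Set.univ := by
        rw [Measure.map_apply hT MeasurableSet.univ, Set.preimage_univ,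
          Measure.restrict_apply MeasurableSet.univ, Set.univ_inter]
    _ = ∑ J : Fin m → S, ρ (cyl (Fin.append I J)) := by
        rw [← sum_measure_cyl]
        refine Finset.sum_congr rfl fun J _ => ?_
        rw [Measure.map_apply hT (measurableSet_cyl J),
          Measure.restrict_apply (hT (measurableSet_cyl J)), cyl_append, Set.inter_comm]

end Cylinders

theorem birk_add {S : Type*} (f : ℕ → (ℕ → S) → ℝ) {m n p : ℕ} (hmn : m ≤ n) (hnp : n ≤ p)
    (x : ℕ → S) : birk f m p x = birk f m n x + birk f n p x :=
  (Finset.sum_Ico_consecutive _ hmn hnp).symm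

theorem birk_eq_sum_shift {S : Type*} (f : ℕ → (ℕ → S) → ℝ) (n m : ℕ) (x : ℕ → S) :
    birk f n (n + m) x = ∑ k ∈ range m, f (n + k) (shift^[k] (shift^[n] x)) := by
  rw [birk, Finset.sum_Ico_eq_sum_range, Nat.add_sub_cancel_left]
  refine Finset.sum_congr rfl fun k _ => ?_
  rw [← Function.iterate_add_apply, add_comm k n]

def IsGibbs {S : Type*} [MeasurableSpace S] (C₀ : ℝ) (ρ : Measure (ℕ → S)) (Z : ℕ → ℝ)
    (E : ℕ → (ℕ → S) → ℝ) : Prop :=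
  ∀ k : ℕ, 1 ≤ k → ∀ x : ℕ → S,
    C₀⁻¹ ≤ (ρ (cyl fun i : Fin k => x i)).toReal * Z k / Real.exp (E k x) ∧
    (ρ (cyl fun i : Fin k => x i)).toReal * Z k / Real.exp (E k x) ≤ C₀

namespace IsGibbs

variable {S : Type*} [MeasurableSpace S] {C₀ : ℝ} {μ ν : Measure (ℕ → S)} {Z Z' : ℕ → ℝ}
  {E E' : ℕ → (ℕ → S) → ℝ} {n m : ℕ}

theorem comparable (h : IsGibbs C₀ μ Z E) (hn : 1 ≤ n) {a : Fin n → S} {x : ℕ → S}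
    (hx : x ∈ cyl a) : Comparable C₀ ((μ (cyl a)).toReal * Z n) (Real.exp (E n x)) := by
  have ha : (fun i : Fin n => x i) = a := funext hx
  exact ha ▸ Comparable.of_le_div_le (h n hn x) (Real.exp_pos _)

theorem pos (h : IsGibbs C₀ μ Z E) (hC₀ : 0 < C₀) (hn : 1 ≤ n) {a : Fin n → S} {x : ℕ → S}
    (hx : x ∈ cyl a) : 0 < (μ (cyl a)).toReal ∧ 0 < Z n := by
  have hprod := (h.comparable hn hx).pos hC₀ (Real.exp_pos _)
  exact (pos_and_pos_or_neg_and_neg_of_mul_pos hprod).resolve_right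
    fun hneg => ENNReal.toReal_nonneg.not_gt hneg.1

theorem comparable_cyl_append [Nonempty S] (hμ : IsGibbs C₀ μ Z E) (hν : IsGibbs C₀ ν Z' E')
    (hE : ∀ x, E (n + m) x = E n x + E' m (shift^[n] x)) (hC₀ : 0 < C₀) (hn : 1 ≤ n) (hm : 1 ≤ m)
    (I : Fin n → S) (J : Fin m → S) :
    Comparable (C₀ ^ 3) ((μ (cyl (Fin.append I J))).toReal * Z (n + m))
      ((μ (cyl I)).toReal * (ν (cyl J)).toReal * (Z n * Z' m)) := by
  obtain ⟨z, hz⟩ := cyl_nonempty (Fin.append I J)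
  obtain ⟨hzI, hzJ⟩ := (mem_cyl_append I J z).mp hz
  have hIJ := hμ.comparable (by omega) hz
  rw [hE, Real.exp_add] at hIJ
  have hprod := (hμ.comparable hn hzI).mul (hν.comparable hm hzJ) hC₀.le hC₀.le
    (Real.exp_pos _).le (Real.exp_pos _).le
  rw [mul_mul_mul_comm] at hprod
  rw [pow_three]
  exact hIJ.trans (hprod.symm (mul_pos hC₀ hC₀)) hC₀.le

end IsGibbs

theorem comparable_of_comparable_cyl_append {S : Type*} [Fintype S] [MeasurableSpace S]
    [TopologicalSpace S] [DiscreteTopology S] [BorelSpace S] {μ ν : Measure (ℕ → S)}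
    [IsFiniteMeasure μ] [IsProbabilityMeasure ν] {C G P : ℝ} {n m : ℕ} {I : Fin n → S}
    (h : ∀ J : Fin m → S, Comparable C ((μ (cyl (Fin.append I J))).toReal * G)
      ((μ (cyl I)).toReal * (ν (cyl J)).toReal * P))
    (hI : 0 < (μ (cyl I)).toReal) : Comparable C G P := by
  have hμI : ∑ J : Fin m → S, (μ (cyl (Fin.append I J))).toReal = (μ (cyl I)).toReal := by
    rw [← ENNReal.toReal_sum fun _ _ => measure_ne_top _ _, ← measure_cyl_eq_sum_append]
  have hν : ∑ J : Fin m → S, (ν (cyl J)).toReal = 1 := by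
    rw [← ENNReal.toReal_sum fun _ _ => measure_ne_top _ _, sum_measure_cyl, measure_univ,
      ENNReal.toReal_one]
  have hsum := Comparable.sum (s := Finset.univ) fun J _ => h J
  rw [← Finset.sum_mul, hμI, ← Finset.sum_mul, ← Finset.mul_sum, hν, mul_one] at hsum
  exact hsum.of_mul_left hI

theorem quasi_bernoulli_general {S : Type*} [Fintype S] [TopologicalSpace S]
    [DiscreteTopology S] [MeasurableSpace S] [BorelSpace S]
    (σ : Measure (ℕ → S))
    (f : ℕ → (ℕ → S) → ℝ)
    (lam : ℝ) (C₀ : ℝ) (hC₀ : 1 ≤ C₀)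
    (μ : Measure (ℕ → S)) [IsProbabilityMeasure μ]
    (hμ : ∀ n : ℕ, 1 ≤ n → ∀ x : ℕ → S,
      C₀⁻¹ ≤ (μ (cyl fun i : Fin n => x i)).toReal
          * ((Fintype.card S : ℝ) ^ n * Zmn σ f lam 0 n) / Real.exp (lam * birk f 0 n x) ∧
      (μ (cyl fun i : Fin n => x i)).toReal
          * ((Fintype.card S : ℝ) ^ n * Zmn σ f lam 0 n) / Real.exp (lam * birk f 0 n x) ≤ C₀)
    (ν : ℕ → Measure (ℕ → S)) (hνprob : ∀ n, IsProbabilityMeasure (ν n))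
    (hν : ∀ n : ℕ, 1 ≤ n → ∀ m : ℕ, 1 ≤ m → ∀ y : ℕ → S,
      C₀⁻¹ ≤ (ν n (cyl fun i : Fin m => y i)).toReal
          * ((Fintype.card S : ℝ) ^ m * Zmn σ f lam n (n + m))
          / Real.exp (lam * ∑ k ∈ Finset.range m, f (n + k) (shift^[k] y)) ∧
      (ν n (cyl fun i : Fin m => y i)).toReal
          * ((Fintype.card S : ℝ) ^ m * Zmn σ f lam n (n + m))
          / Real.exp (lam * ∑ k ∈ Finset.range m, f (n + k) (shift^[k] y)) ≤ C₀) :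
    ∃ C : ℝ, 1 ≤ C ∧ ∀ (n m : ℕ), 1 ≤ n → 1 ≤ m → ∀ (I : Fin n → S) (J : Fin m → S),
      C⁻¹ * ((μ (cyl I)).toReal * (ν n (cyl J)).toReal) ≤ (μ (cyl (Fin.append I J))).toReal ∧
      (μ (cyl (Fin.append I J))).toReal ≤ C * ((μ (cyl I)).toReal * (ν n (cyl J)).toReal) := by
  have hC₀pos : 0 < C₀ := zero_lt_one.trans_le hC₀
  have hC : 0 < C₀ ^ 3 := pow_pos hC₀pos 3
  refine ⟨C₀ ^ 3 * C₀ ^ 3, one_le_mul_of_one_le_of_one_le (one_le_pow₀ hC₀) (one_le_pow₀ hC₀),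
    fun n m hn hm I J => ?_⟩
  have := hνprob n
  have : Nonempty S := ⟨I ⟨0, hn⟩⟩
  have hμG : IsGibbs C₀ μ (fun k => (Fintype.card S : ℝ) ^ k * Zmn σ f lam 0 k)
      (fun k x => lam * birk f 0 k x) := hμ
  have hνG : IsGibbs C₀ (ν n) (fun k => (Fintype.card S : ℝ) ^ k * Zmn σ f lam n (n + k))
      (fun k y => lam * ∑ j ∈ Finset.range k, f (n + j) (shift^[j] y)) := hν n hn
  have hsplit (x : ℕ → S) : lam * birk f 0 (n + m) x =
      lam * birk f 0 n x + lam * ∑ j ∈ Finset.range m, f (n + j) (shift^[j] (shift^[n] x)) := by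
    rw [birk_add f n.zero_le (n.le_add_right m), birk_eq_sum_shift, mul_add]
  have hloc := hμG.comparable_cyl_append hνG hsplit hC₀pos hn hm I
  obtain ⟨hI, -⟩ := hμG.pos hC₀pos hn (cyl_nonempty I).some_mem
  obtain ⟨-, hG⟩ := hμG.pos hC₀pos (by omega) (cyl_nonempty (Fin.append I J)).some_mem
  have hZ := comparable_of_comparable_cyl_append hloc hI
  exact ((hloc J).trans ((hZ.symm hC).mul_left (by positivity)) hC.le).of_mul_right hG

/-- Quasi-Bernoulli property: if `μ` is a Gibbs measure at parameter `λ`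
and, for each `n ≥ 1`, `ν n` is a Gibbs measure for the shifted sequence of potentials,
then `μ([IJ]) ≍ μ([I]) ν_n([J])` with uniform constants. -/
theorem quasi_bernoulli {S : Type*} [Fintype S] [TopologicalSpace S]
    [DiscreteTopology S] [MeasurableSpace S] [BorelSpace S] (hq : 2 ≤ Fintype.card S)
    (σ : Measure (ℕ → S)) [IsProbabilityMeasure σ]
    (hσ : ∀ (m : ℕ) (a : Fin m → S), σ (cyl a) = (Fintype.card S : ℝ≥0∞)⁻¹ ^ m)
    (f : ℕ → (ℕ → S) → ℝ) (hfc : ∀ n, Continuous (f n))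
    (M : ℝ) (hfb : ∀ n x, |f n x| ≤ M)
    (D : ℝ) (hH2 : H2 f D) (lam : ℝ) (C₀ : ℝ) (hC₀ : 1 ≤ C₀)
    (μ : Measure (ℕ → S)) [IsProbabilityMeasure μ]
    (hμ : ∀ n : ℕ, 1 ≤ n → ∀ x : ℕ → S,
      C₀⁻¹ ≤ (μ (cyl fun i : Fin n => x i)).toReal
          * ((Fintype.card S : ℝ) ^ n * Zmn σ f lam 0 n) / Real.exp (lam * birk f 0 n x) ∧
      (μ (cyl fun i : Fin n => x i)).toReal
          * ((Fintype.card S : ℝ) ^ n * Zmn σ f lam 0 n) / Real.exp (lam * birk f 0 n x) ≤ C₀)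
    (ν : ℕ → Measure (ℕ → S)) (hνprob : ∀ n, IsProbabilityMeasure (ν n))
    (hν : ∀ n : ℕ, 1 ≤ n → ∀ m : ℕ, 1 ≤ m → ∀ y : ℕ → S,
      C₀⁻¹ ≤ (ν n (cyl fun i : Fin m => y i)).toReal
          * ((Fintype.card S : ℝ) ^ m * Zmn σ f lam n (n + m))
          / Real.exp (lam * ∑ k ∈ Finset.range m, f (n + k) (shift^[k] y)) ∧
      (ν n (cyl fun i : Fin m => y i)).toReal
          * ((Fintype.card S : ℝ) ^ m * Zmn σ f lam n (n + m))
          / Real.exp (lam * ∑ k ∈ Finset.range m, f (n + k) (shift^[k] y)) ≤ C₀) :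
    ∃ C : ℝ, 1 ≤ C ∧ ∀ (n m : ℕ), 1 ≤ n → 1 ≤ m → ∀ (I : Fin n → S) (J : Fin m → S),
      C⁻¹ * ((μ (cyl I)).toReal * (ν n (cyl J)).toReal) ≤ (μ (cyl (Fin.append I J))).toReal ∧
      (μ (cyl (Fin.append I J))).toReal ≤ C * ((μ (cyl I)).toReal * (ν n (cyl J)).toReal) :=
  quasi_bernoulli_general σ f lam C₀ hC₀ μ hμ ν hνprob hν
end
end

section
/- (Law of large numbers for Gibbs measures.) Assume hypotheses (H1) and (H2). Fix λ ∈ ℝ and let μ be a Gibbs measure at parameter λ, i.e. a Borel probability measure on X for which there is C ≥ 1 with C^{−1} ≤ μ([x_0,…,x_{n−1}]) · q^n Z_n(λ)/exp(λ S_n f(x)) ≤ C for all n ≥ 1, x ∈ X. Then for μ-almost every x ∈ X: φ'₋(λ) ≤ liminf_{N→∞} S_N f(x)/N ≤ limsup_{N→∞} S_N f(x)/N ≤ φ'₊(λ), where φ'₋(λ) and φ'₊(λ) are the left and right derivatives of the convex function φ at λ. -/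
open MeasureTheory Filter Finset
open scoped ENNReal Topology

noncomputable section

/-!
Fix `t` and `a` with `φ (λ + t) - φ λ < t a`. By (H2), the set `{t S_N f ≥ t a N}` is covered
by cylinders `[w]` of length `N` on which `t S_N f ≥ t a N - |t| D`, so that there
`1 ≤ e^{|t| D - t a N} e^{t S_N f}`. Multiplying the Gibbs bound
`μ [w] ≤ C q⁻ᴺ e^{λ S_N f} / Z_N(λ)` by this and summing over all words gives, by (H2) again,
`μ {t S_N f ≥ t a N} ≤ K e^{-t a N} Z_N(λ + t) / Z_N(λ)`. By (H1) this bound decays at the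
exponential rate `φ (λ + t) - φ λ - t a < 0`, so by Borel–Cantelli `t S_N f < t a N` for all
large `N`, almost surely. The one-sided derivatives are limits of slopes, so every `a > φ'₊(λ)`
admits such a `t > 0` and every `a < φ'₋(λ)` such a `t < 0`.
-/

section Birkhoff

variable {S : Type*} {f : ℕ → (ℕ → S) → ℝ}

lemma continuous_shift [TopologicalSpace S] : Continuous (shift (S := S)) :=
  continuous_pi fun n => continuous_apply (n + 1)

lemma continuous_birk [TopologicalSpace S] (hfc : ∀ n, Continuous (f n)) (m n : ℕ) :
    Continuous (birk f m n) :=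
  continuous_finsetSum _ fun k _ => (hfc k).comp (continuous_shift.iterate k)

lemma abs_birk_le {M : ℝ} (hfb : ∀ n x, |f n x| ≤ M) (N : ℕ) (x : ℕ → S) :
    |birk f 0 N x| ≤ N * M :=
  calc |birk f 0 N x| ≤ ∑ k ∈ Finset.Ico 0 N, |f k (shift^[k] x)| :=
        Finset.abs_sum_le_sum_abs _ _
    _ ≤ ∑ _k ∈ Finset.Ico 0 N, M := Finset.sum_le_sum fun k _ => hfb k _
    _ = N * M := by simp

lemma abs_birk_div_le {M : ℝ} (hfb : ∀ n x, |f n x| ≤ M) {N : ℕ} (hN : 0 < N)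
    (x : ℕ → S) : |birk f 0 N x / N| ≤ M := by
  have hN' : (0 : ℝ) < N := Nat.cast_pos.mpr hN
  rw [abs_div, Nat.abs_cast, div_le_iff₀ hN', mul_comm]
  exact abs_birk_le hfb N x

lemma H2.nonneg [Nonempty S] {D : ℝ} (hH2 : H2 f D) : 0 ≤ D := by
  let x : ℕ → S := Classical.arbitrary _
  simpa using hH2 1 le_rfl x x fun _ _ => rfl

lemma H2.abs_birk_sub_le {D : ℝ} (hH2 : H2 f D) (hD : 0 ≤ D) {N : ℕ} {x y : ℕ → S}
    (h : ∀ i, i < N → x i = y i) : |birk f 0 N x - birk f 0 N y| ≤ D := by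
  rcases Nat.eq_zero_or_pos N with rfl | hN
  · simpa [birk] using hD
  calc |birk f 0 N x - birk f 0 N y|
      = |∑ k ∈ Finset.range N, (f k (shift^[k] x) - f k (shift^[k] y))| := by
        simp [birk, Finset.sum_sub_distrib]
    _ ≤ ∑ k ∈ Finset.range N, |f k (shift^[k] x) - f k (shift^[k] y)| :=
        Finset.abs_sum_le_sum_abs _ _
    _ ≤ D := hH2 N hN x y h

def padWord (s₀ : S) {N : ℕ} (w : Fin N → S) : ℕ → S :=
  fun i => if h : i < N then w ⟨i, h⟩ else s₀

lemma padWord_restrict (s₀ : S) {N : ℕ} (w : Fin N → S) :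
    (fun i : Fin N => padWord s₀ w i) = w :=
  funext fun i => by simp [padWord]

lemma H2.abs_birk_sub_birk_padWord_le {D : ℝ} (hH2 : H2 f D) (hD : 0 ≤ D) (s₀ : S)
    (N : ℕ) (x : ℕ → S) :
    |birk f 0 N x - birk f 0 N (padWord s₀ fun i : Fin N => x i)| ≤ D :=
  hH2.abs_birk_sub_le hD fun i hi => by simp [padWord, hi]

lemma H2.setOf_le_mul_birk_subset [Fintype S] {D : ℝ} (hH2 : H2 f D) (hD : 0 ≤ D) (s₀ : S)
    (t r : ℝ) (N : ℕ) :
    {x | r ≤ t * birk f 0 N x} ⊆ ⋃ w ∈ Finset.univ.filter fun w : Fin N → S =>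
      r - |t| * D ≤ t * birk f 0 N (padWord s₀ w), cyl w := by
  intro x hx
  refine Set.mem_biUnion (x := fun i : Fin N => x i) ?_ fun i => rfl
  have hx : r ≤ t * birk f 0 N x := hx
  have h : |t * birk f 0 N x - t * birk f 0 N (padWord s₀ fun i : Fin N => x i)| ≤ |t| * D := by
    rw [← mul_sub, abs_mul]
    exact mul_le_mul_of_nonneg_left (hH2.abs_birk_sub_birk_padWord_le hD s₀ N x) (abs_nonneg t)
  refine Finset.mem_filter.mpr ⟨Finset.mem_univ _, ?_⟩
  linarith [(abs_le.mp h).2]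

end Birkhoff

section Bernoulli

variable {S : Type*} [MeasurableSpace S]

lemma measurable_restrict_fin (N : ℕ) : Measurable fun (x : ℕ → S) (i : Fin N) => x i :=
  measurable_pi_lambda _ fun _ => measurable_pi_apply _

lemma integrable_comp_restrict [Finite S] [MeasurableSingletonClass S]
    {σ : Measure (ℕ → S)} [IsFiniteMeasure σ] {N : ℕ} (g : (Fin N → S) → ℝ) :
    Integrable (fun x => g (fun i => x i)) σ :=
  Integrable.of_finite.comp_measurable (measurable_restrict_fin N)

lemma integral_comp_restrict [Fintype S] [MeasurableSingletonClass S]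
    {σ : Measure (ℕ → S)} [IsFiniteMeasure σ]
    (hσ : ∀ (m : ℕ) (a : Fin m → S), σ (cyl a) = (Fintype.card S : ℝ≥0∞)⁻¹ ^ m)
    {N : ℕ} (g : (Fin N → S) → ℝ) :
    ∫ x, g (fun i => x i) ∂σ = ∑ w, ((Fintype.card S : ℝ)⁻¹ ^ N) * g w := by
  have hπ := measurable_restrict_fin (S := S) N
  have hfiber (w : Fin N → S) : (fun (x : ℕ → S) (i : Fin N) => x i) ⁻¹' {w} = cyl w := by
    ext x; simp [cyl, funext_iff]
  rw [← integral_map hπ.aemeasurable Integrable.of_finite.aestronglyMeasurable,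
    integral_fintype Integrable.of_finite]
  refine Finset.sum_congr rfl fun w _ => ?_
  rw [map_measureReal_apply hπ (measurableSet_singleton w), hfiber, measureReal_def, hσ,
    smul_eq_mul, ENNReal.toReal_pow, ENNReal.toReal_inv, ENNReal.toReal_natCast]

end Bernoulli

section PartitionFunction

variable {S : Type*} [TopologicalSpace S] [MeasurableSpace S] [OpensMeasurableSpace (ℕ → S)]
  {σ : Measure (ℕ → S)} [IsProbabilityMeasure σ] {f : ℕ → (ℕ → S) → ℝ} {M : ℝ}

lemma integrable_exp_mul_birk (hfc : ∀ n, Continuous (f n)) (hfb : ∀ n x, |f n x| ≤ M)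
    (s : ℝ) (N : ℕ) : Integrable (fun x => Real.exp (s * birk f 0 N x)) σ := by
  refine Integrable.mono' (integrable_const (Real.exp (|s| * (N * M))))
    (Real.continuous_exp.comp (continuous_const.mul (continuous_birk hfc 0 N))).aestronglyMeasurable
    (ae_of_all _ fun x => ?_)
  rw [Real.norm_eq_abs, Real.abs_exp, Real.exp_le_exp]
  calc s * birk f 0 N x ≤ |s| * |birk f 0 N x| := (le_abs_self _).trans (abs_mul _ _).le
    _ ≤ |s| * (N * M) := mul_le_mul_of_nonneg_left (abs_birk_le hfb N x) (abs_nonneg s)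

lemma Zmn_pos (hfc : ∀ n, Continuous (f n)) (hfb : ∀ n x, |f n x| ≤ M) (s : ℝ) (N : ℕ) :
    0 < Zmn σ f s 0 N :=
  integral_exp_pos (integrable_exp_mul_birk hfc hfb s N)

lemma H2.sum_exp_mul_birk_padWord_le [Fintype S] [MeasurableSingletonClass S] {D : ℝ}
    (hH2 : H2 f D) (hD : 0 ≤ D)
    (hσ : ∀ (m : ℕ) (a : Fin m → S), σ (cyl a) = (Fintype.card S : ℝ≥0∞)⁻¹ ^ m)
    (hfc : ∀ n, Continuous (f n)) (hfb : ∀ n x, |f n x| ≤ M) (s₀ : S) (s : ℝ) (N : ℕ) :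
    ∑ w : Fin N → S, (Fintype.card S : ℝ)⁻¹ ^ N * Real.exp (s * birk f 0 N (padWord s₀ w))
      ≤ Real.exp (|s| * D) * Zmn σ f s 0 N := by
  rw [← integral_comp_restrict hσ, Zmn, ← integral_const_mul]
  refine integral_mono
    (integrable_comp_restrict fun w => Real.exp (s * birk f 0 N (padWord s₀ w)))
    ((integrable_exp_mul_birk hfc hfb s N).const_mul _) fun x => ?_
  rw [← Real.exp_add, Real.exp_le_exp]
  have h := hH2.abs_birk_sub_birk_padWord_le hD s₀ N x
  have : |s * birk f 0 N (padWord s₀ fun i : Fin N => x i) - s * birk f 0 N x| ≤ |s| * D := by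
    rw [← mul_sub, abs_mul, abs_sub_comm]
    exact mul_le_mul_of_nonneg_left h (abs_nonneg s)
  linarith [(abs_le.mp this).2]

end PartitionFunction

section Gibbs

variable {S : Type*} [Fintype S] [MeasurableSpace S] {σ μ : Measure (ℕ → S)}
  {f : ℕ → (ℕ → S) → ℝ} {lam C : ℝ}

def HasGibbsUpperBound (σ μ : Measure (ℕ → S)) (f : ℕ → (ℕ → S) → ℝ) (lam C : ℝ) : Prop :=
  ∀ n : ℕ, 1 ≤ n → ∀ x : ℕ → S,
    (μ (cyl fun i : Fin n => x i)).toReal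
      * ((Fintype.card S : ℝ) ^ n * Zmn σ f lam 0 n) / Real.exp (lam * birk f 0 n x) ≤ C

lemma HasGibbsUpperBound.measureReal_cyl_le [Nonempty S] (hμ : HasGibbsUpperBound σ μ f lam C)
    {N : ℕ} (hN : 1 ≤ N) (hZ : 0 < Zmn σ f lam 0 N) (s₀ : S) (w : Fin N → S) :
    μ.real (cyl w) ≤ C / Zmn σ f lam 0 N
      * ((Fintype.card S : ℝ)⁻¹ ^ N * Real.exp (lam * birk f 0 N (padWord s₀ w))) := by
  have h := hμ N hN (padWord s₀ w)
  rw [padWord_restrict, ← measureReal_def, div_le_iff₀ (Real.exp_pos _)] at h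
  have hq : (0 : ℝ) < (Fintype.card S : ℝ) ^ N := pow_pos (Nat.cast_pos.mpr Fintype.card_pos) N
  rw [inv_pow, div_mul_eq_mul_div, le_div_iff₀ hZ, ← div_eq_inv_mul, mul_div_assoc',
    le_div_iff₀ hq]
  linarith

lemma HasGibbsUpperBound.measureReal_cyl_le_of_le [Nonempty S]
    (hμ : HasGibbsUpperBound σ μ f lam C) (hC : 0 ≤ C) {N : ℕ} (hN : 1 ≤ N)
    (hZ : 0 < Zmn σ f lam 0 N) (s₀ : S) {w : Fin N → S} {t r : ℝ}
    (hw : r ≤ t * birk f 0 N (padWord s₀ w)) :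
    μ.real (cyl w) ≤ C / Zmn σ f lam 0 N * Real.exp (-r)
      * ((Fintype.card S : ℝ)⁻¹ ^ N * Real.exp ((lam + t) * birk f 0 N (padWord s₀ w))) := by
  refine (hμ.measureReal_cyl_le hN hZ s₀ w).trans ?_
  calc C / Zmn σ f lam 0 N
        * ((Fintype.card S : ℝ)⁻¹ ^ N * Real.exp (lam * birk f 0 N (padWord s₀ w)))
      ≤ C / Zmn σ f lam 0 N * ((Fintype.card S : ℝ)⁻¹ ^ N
          * (Real.exp (t * birk f 0 N (padWord s₀ w) - r)
            * Real.exp (lam * birk f 0 N (padWord s₀ w)))) := by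
        gcongr
        exact le_mul_of_one_le_left (Real.exp_pos _).le (Real.one_le_exp (by linarith))
    _ = _ := by
        simp only [add_mul, sub_eq_add_neg, Real.exp_add]
        ring

variable [TopologicalSpace S] [OpensMeasurableSpace (ℕ → S)] [MeasurableSingletonClass S]
  [IsProbabilityMeasure σ] [IsFiniteMeasure μ] {M D : ℝ}

lemma HasGibbsUpperBound.measureReal_le_mul_birk_le [Nonempty S]
    (hμ : HasGibbsUpperBound σ μ f lam C) (hC : 0 ≤ C)
    (hσ : ∀ (m : ℕ) (a : Fin m → S), σ (cyl a) = (Fintype.card S : ℝ≥0∞)⁻¹ ^ m)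
    (hfc : ∀ n, Continuous (f n)) (hfb : ∀ n x, |f n x| ≤ M) (hH2 : H2 f D)
    (t r : ℝ) {N : ℕ} (hN : 1 ≤ N) :
    μ.real {x | r ≤ t * birk f 0 N x} ≤ C * Real.exp ((|t| + |lam + t|) * D) * Real.exp (-r)
      * (Zmn σ f (lam + t) 0 N / Zmn σ f lam 0 N) := by
  obtain ⟨s₀⟩ := ‹Nonempty S›
  have hD := hH2.nonneg
  have hZ := Zmn_pos (σ := σ) hfc hfb lam N
  let c := C / Zmn σ f lam 0 N * Real.exp (-(r - |t| * D))
  let b : (Fin N → S) → ℝ := fun w =>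
    (Fintype.card S : ℝ)⁻¹ ^ N * Real.exp ((lam + t) * birk f 0 N (padWord s₀ w))
  calc μ.real {x | r ≤ t * birk f 0 N x}
      ≤ ∑ w ∈ Finset.univ.filter (fun w : Fin N → S =>
          r - |t| * D ≤ t * birk f 0 N (padWord s₀ w)), μ.real (cyl w) :=
        (measureReal_mono (hH2.setOf_le_mul_birk_subset hD s₀ t r N) (measure_ne_top μ _)).trans
          (measureReal_biUnion_finset_le _ _)
    _ ≤ ∑ w ∈ Finset.univ.filter (fun w : Fin N → S =>
          r - |t| * D ≤ t * birk f 0 N (padWord s₀ w)), c * b w :=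
        Finset.sum_le_sum fun w hw =>
          hμ.measureReal_cyl_le_of_le hC hN hZ s₀ (Finset.mem_filter.mp hw).2
    _ ≤ ∑ w, c * b w := Finset.sum_le_sum_of_subset_of_nonneg (Finset.subset_univ _)
        fun w _ _ => by positivity
    _ = c * ∑ w, b w := (Finset.mul_sum _ _ _).symm
    _ ≤ c * (Real.exp (|lam + t| * D) * Zmn σ f (lam + t) 0 N) := by
        gcongr
        exact hH2.sum_exp_mul_birk_padWord_le hD hσ hfc hfb s₀ _ N
    _ = _ := by
        dsimp only [c]
        rw [show -(r - |t| * D) = |t| * D + -r by ring, Real.exp_add, add_mul, Real.exp_add]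
        ring

end Gibbs

section RealAnalysis

open Real

lemma exists_pos_sub_lt_mul_of_hasDerivWithinAt_Ioi {φ : ℝ → ℝ} {lam d a : ℝ}
    (hd : HasDerivWithinAt φ d (Set.Ioi lam) lam) (ha : d < a) :
    ∃ t > 0, φ (lam + t) - φ lam < t * a := by
  have hslope := (hasDerivWithinAt_iff_tendsto_slope' Set.self_notMem_Ioi).1 hd
  obtain ⟨y, hy, hlt⟩ := ((hslope.eventually_lt_const ha).and self_mem_nhdsWithin).exists
  have hy' : 0 < y - lam := sub_pos.2 hlt
  rw [slope_def_field, div_lt_iff₀ hy'] at hy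
  exact ⟨y - lam, hy', by rwa [add_sub_cancel, mul_comm]⟩

lemma exists_neg_sub_lt_mul_of_hasDerivWithinAt_Iio {φ : ℝ → ℝ} {lam d a : ℝ}
    (hd : HasDerivWithinAt φ d (Set.Iio lam) lam) (ha : a < d) :
    ∃ t < 0, φ (lam + t) - φ lam < t * a := by
  have hslope := (hasDerivWithinAt_iff_tendsto_slope' Set.self_notMem_Iio).1 hd
  obtain ⟨y, hy, hlt⟩ := ((hslope.eventually_const_lt ha).and self_mem_nhdsWithin).exists
  have hy' : y - lam < 0 := sub_neg.2 hlt
  rw [slope_def_field, lt_div_iff_of_neg hy'] at hy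
  exact ⟨y - lam, hy', by rwa [add_sub_cancel, mul_comm]⟩

lemma tendsto_log_mul_exp_mul_div_div {K r α β : ℝ} (hK : 0 < K) {u v : ℕ → ℝ}
    (hu : ∀ N, 0 < u N) (hv : ∀ N, 0 < v N)
    (hu' : Tendsto (fun N : ℕ => log (u N) / N) atTop (𝓝 α))
    (hv' : Tendsto (fun N : ℕ => log (v N) / N) atTop (𝓝 β)) :
    Tendsto (fun N : ℕ => log (K * exp (-(r * N)) * (u N / v N)) / N) atTop
      (𝓝 (α - β - r)) := by
  have h := ((tendsto_const_div_atTop_nhds_zero_nat (log K)).add (hu'.sub hv')).sub_const r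
  rw [zero_add] at h
  refine h.congr' ?_
  filter_upwards [eventually_gt_atTop 0] with N hN
  have hN' : (N : ℝ) ≠ 0 := Nat.cast_ne_zero.2 hN.ne'
  rw [log_mul (by positivity) (div_pos (hu N) (hv N)).ne', log_mul hK.ne' (exp_pos _).ne',
    log_exp, log_div (hu N).ne' (hv N).ne']
  field_simp
  ring

lemma summable_of_tendsto_log_div_neg {b : ℕ → ℝ} (hb : ∀ N, 0 < b N) {L : ℝ} (hL : L < 0)
    (h : Tendsto (fun N : ℕ => log (b N) / N) atTop (𝓝 L)) : Summable b := by
  have hr : exp (L / 2) < 1 := exp_lt_one_iff.2 (by linarith)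
  refine (summable_geometric_of_lt_one (exp_pos _).le hr).of_norm_bounded_eventually_nat ?_
  filter_upwards [h.eventually_lt_const (by linarith : L < L / 2), eventually_gt_atTop 0]
    with N hlog hN
  rw [div_lt_iff₀ (Nat.cast_pos.2 hN)] at hlog
  rw [norm_of_nonneg (hb N).le, ← exp_nat_mul, ← exp_log (hb N), exp_le_exp, mul_comm]
  exact hlog.le

end RealAnalysis

section BorelCantelli

variable {X : Type*} [MeasurableSpace X] {μ : Measure X}

lemma ae_eventually_notMem_of_summable_measureReal [IsFiniteMeasure μ] {A : ℕ → Set X}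
    {b : ℕ → ℝ} (hb : Summable b) (hA : ∀ᶠ N in atTop, μ.real (A N) ≤ b N) :
    ∀ᵐ x ∂μ, ∀ᶠ N in atTop, x ∉ A N := by
  have hs : Summable fun N => μ.real (A N) :=
    hb.of_norm_bounded_eventually_nat
      (hA.mono fun N h => by rwa [Real.norm_of_nonneg measureReal_nonneg])
  refine ae_eventually_notMem ?_
  rw [tsum_congr fun N => (ofReal_measureReal (μ := μ) (s := A N)).symm,
    ← ENNReal.ofReal_tsum_of_nonneg (fun _ => measureReal_nonneg) hs]
  exact ENNReal.ofReal_ne_top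

lemma ae_limsup_le_of_forall_gt {u : X → ℕ → ℝ}
    (hu : ∀ x, IsCoboundedUnder (· ≤ ·) atTop (u x)) {c : ℝ}
    (h : ∀ a, c < a → ∀ᵐ x ∂μ, ∀ᶠ N in atTop, u x N ≤ a) :
    ∀ᵐ x ∂μ, limsup (u x) atTop ≤ c := by
  have hk (k : ℕ) : c < c + 1 / (k + 1) := lt_add_of_pos_right c Nat.one_div_pos_of_nat
  filter_upwards [ae_all_iff.2 fun k => h _ (hk k)] with x hx
  have hlim : Tendsto (fun k : ℕ => c + 1 / ((k : ℝ) + 1)) atTop (𝓝 c) := by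
    simpa using tendsto_one_div_add_atTop_nhds_zero_nat.const_add c
  exact ge_of_tendsto' hlim fun k => limsup_le_of_le (hu x) (hx k)

lemma ae_le_liminf_of_forall_lt {u : X → ℕ → ℝ}
    (hu : ∀ x, IsCoboundedUnder (· ≥ ·) atTop (u x)) {c : ℝ}
    (h : ∀ a, a < c → ∀ᵐ x ∂μ, ∀ᶠ N in atTop, a ≤ u x N) :
    ∀ᵐ x ∂μ, c ≤ liminf (u x) atTop := by
  have hk (k : ℕ) : c - 1 / (k + 1) < c := sub_lt_self c Nat.one_div_pos_of_nat
  filter_upwards [ae_all_iff.2 fun k => h _ (hk k)] with x hx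
  have hlim : Tendsto (fun k : ℕ => c - 1 / ((k : ℝ) + 1)) atTop (𝓝 c) := by
    simpa using tendsto_one_div_add_atTop_nhds_zero_nat.const_sub c
  exact le_of_tendsto' hlim fun k => le_liminf_of_le (hu x) (hx k)

end BorelCantelli

section LawOfLargeNumbers

variable {S : Type*} [Fintype S] [MeasurableSpace S] [TopologicalSpace S]
  [OpensMeasurableSpace (ℕ → S)] [MeasurableSingletonClass S] [Nonempty S]
  {σ μ : Measure (ℕ → S)} [IsProbabilityMeasure σ] [IsFiniteMeasure μ]
  {f : ℕ → (ℕ → S) → ℝ} {lam C M D : ℝ} {φ : ℝ → ℝ}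

lemma HasGibbsUpperBound.ae_eventually_mul_birk_lt (hμ : HasGibbsUpperBound σ μ f lam C)
    (hC : 0 < C) (hσ : ∀ (m : ℕ) (a : Fin m → S), σ (cyl a) = (Fintype.card S : ℝ≥0∞)⁻¹ ^ m)
    (hfc : ∀ n, Continuous (f n)) (hfb : ∀ n x, |f n x| ≤ M) (hH2 : H2 f D)
    (hH1 : ∀ t : ℝ, Tendsto (fun n : ℕ => Real.log (Zmn σ f t 0 n) / n) atTop (𝓝 (φ t)))
    {t a : ℝ} (h : φ (lam + t) - φ lam < t * a) :
    ∀ᵐ x ∂μ, ∀ᶠ N in atTop, t * birk f 0 N x < t * a * N := by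
  have hZ := Zmn_pos (σ := σ) hfc hfb
  have hK : 0 < C * Real.exp ((|t| + |lam + t|) * D) := by positivity
  have hrate := tendsto_log_mul_exp_mul_div_div (r := t * a) hK (hZ (lam + t)) (hZ lam)
    (hH1 (lam + t)) (hH1 lam)
  have hsum := summable_of_tendsto_log_div_neg
    (fun N => mul_pos (mul_pos hK (Real.exp_pos _)) (div_pos (hZ _ N) (hZ _ N))) (by linarith) hrate
  have hbound : ∀ᶠ N in atTop, μ.real {x | t * a * N ≤ t * birk f 0 N x}
      ≤ C * Real.exp ((|t| + |lam + t|) * D) * Real.exp (-(t * a * N))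
        * (Zmn σ f (lam + t) 0 N / Zmn σ f lam 0 N) :=
    (eventually_ge_atTop 1).mono fun N hN =>
      hμ.measureReal_le_mul_birk_le hC.le hσ hfc hfb hH2 t _ hN
  filter_upwards [ae_eventually_notMem_of_summable_measureReal hsum hbound] with x hx
  filter_upwards [hx] with N hN
  simpa using hN

end LawOfLargeNumbers

theorem lln_for_gibbs_general {S : Type*} [Fintype S] [TopologicalSpace S]
    [DiscreteTopology S] [MeasurableSpace S] [BorelSpace S]
    (σ : Measure (ℕ → S)) [IsProbabilityMeasure σ]
    (hσ : ∀ (m : ℕ) (a : Fin m → S), σ (cyl a) = (Fintype.card S : ℝ≥0∞)⁻¹ ^ m)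
    (f : ℕ → (ℕ → S) → ℝ) (hfc : ∀ n, Continuous (f n))
    (M : ℝ) (hfb : ∀ n x, |f n x| ≤ M)
    (φ : ℝ → ℝ)
    (hH1 : ∀ t : ℝ, Tendsto (fun n : ℕ => Real.log (Zmn σ f t 0 n) / n) atTop (𝓝 (φ t)))
    (D : ℝ) (hH2 : H2 f D)
    (lam : ℝ) (μ : Measure (ℕ → S)) [IsProbabilityMeasure μ] (C : ℝ) (hC : 1 ≤ C)
    (hGibbs : ∀ n : ℕ, 1 ≤ n → ∀ x : ℕ → S,
      C⁻¹ ≤ (μ (cyl fun i : Fin n => x i)).toReal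
          * ((Fintype.card S : ℝ) ^ n * Zmn σ f lam 0 n) / Real.exp (lam * birk f 0 n x) ∧
      (μ (cyl fun i : Fin n => x i)).toReal
          * ((Fintype.card S : ℝ) ^ n * Zmn σ f lam 0 n) / Real.exp (lam * birk f 0 n x) ≤ C)
    (dm dp : ℝ)
    (hdm : HasDerivWithinAt φ dm (Set.Iio lam) lam)
    (hdp : HasDerivWithinAt φ dp (Set.Ioi lam) lam) :
    ∀ᵐ x ∂μ, dm ≤ Filter.liminf (fun N : ℕ => birk f 0 N x / N) atTop ∧
      Filter.limsup (fun N : ℕ => birk f 0 N x / N) atTop ≤ dp := by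
  have : Nonempty S := ⟨(nonempty_of_isProbabilityMeasure μ).some 0⟩
  have hμ : HasGibbsUpperBound σ μ f lam C := fun n hn x => (hGibbs n hn x).2
  have key {t a : ℝ} (h : φ (lam + t) - φ lam < t * a) :=
    hμ.ae_eventually_mul_birk_lt (by linarith) hσ hfc hfb hH2 hH1 h
  have hbdd (x : ℕ → S) : ∀ᶠ N : ℕ in atTop, |birk f 0 N x / N| ≤ M :=
    (eventually_gt_atTop 0).mono fun _ hN => abs_birk_div_le hfb hN x
  refine (ae_le_liminf_of_forall_lt (fun x => isCoboundedUnder_ge_of_eventually_le atTop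
      ((hbdd x).mono fun _ h => (abs_le.1 h).2)) fun a ha => ?_).and
    (ae_limsup_le_of_forall_gt (fun x => isCoboundedUnder_le_of_eventually_le atTop
      ((hbdd x).mono fun _ h => (abs_le.1 h).1)) fun a ha => ?_)
  · obtain ⟨t, ht, hta⟩ := exists_neg_sub_lt_mul_of_hasDerivWithinAt_Iio hdm ha
    filter_upwards [key hta] with x hx
    filter_upwards [hx, eventually_gt_atTop 0] with N hN hN0
    rw [le_div_iff₀ (Nat.cast_pos.2 hN0)]
    rw [mul_assoc] at hN
    linarith [lt_of_mul_lt_mul_of_nonpos_left hN ht.le]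
  · obtain ⟨t, ht, hta⟩ := exists_pos_sub_lt_mul_of_hasDerivWithinAt_Ioi hdp ha
    filter_upwards [key hta] with x hx
    filter_upwards [hx, eventually_gt_atTop 0] with N hN hN0
    rw [div_le_iff₀ (Nat.cast_pos.2 hN0)]
    rw [mul_assoc] at hN
    linarith [lt_of_mul_lt_mul_left hN ht.le]

/-- Law of large numbers for Gibbs measures: under (H1) and (H2),
if `μ` is a Gibbs measure at parameter `λ`, then `μ`-a.e.
`φ'₋(λ) ≤ liminf S_N f/N ≤ limsup S_N f/N ≤ φ'₊(λ)`. -/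
theorem lln_for_gibbs {S : Type*} [Fintype S] [TopologicalSpace S]
    [DiscreteTopology S] [MeasurableSpace S] [BorelSpace S] (hq : 2 ≤ Fintype.card S)
    (σ : Measure (ℕ → S)) [IsProbabilityMeasure σ]
    (hσ : ∀ (m : ℕ) (a : Fin m → S), σ (cyl a) = (Fintype.card S : ℝ≥0∞)⁻¹ ^ m)
    (f : ℕ → (ℕ → S) → ℝ) (hfc : ∀ n, Continuous (f n))
    (M : ℝ) (hfb : ∀ n x, |f n x| ≤ M)
    (φ : ℝ → ℝ)
    (hH1 : ∀ t : ℝ, Tendsto (fun n : ℕ => Real.log (Zmn σ f t 0 n) / n) atTop (𝓝 (φ t)))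
    (D : ℝ) (hH2 : H2 f D)
    (lam : ℝ) (μ : Measure (ℕ → S)) [IsProbabilityMeasure μ] (C : ℝ) (hC : 1 ≤ C)
    (hGibbs : ∀ n : ℕ, 1 ≤ n → ∀ x : ℕ → S,
      C⁻¹ ≤ (μ (cyl fun i : Fin n => x i)).toReal
          * ((Fintype.card S : ℝ) ^ n * Zmn σ f lam 0 n) / Real.exp (lam * birk f 0 n x) ∧
      (μ (cyl fun i : Fin n => x i)).toReal
          * ((Fintype.card S : ℝ) ^ n * Zmn σ f lam 0 n) / Real.exp (lam * birk f 0 n x) ≤ C)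
    (dm dp : ℝ)
    (hdm : HasDerivWithinAt φ dm (Set.Iio lam) lam)
    (hdp : HasDerivWithinAt φ dp (Set.Ioi lam) lam) :
    ∀ᵐ x ∂μ, dm ≤ Filter.liminf (fun N : ℕ => birk f 0 N x / N) atTop ∧
      Filter.limsup (fun N : ℕ => birk f 0 N x / N) atTop ≤ dp :=
  lln_for_gibbs_general σ hσ f hfc M hfb φ hH1 D hH2 lam μ C hC hGibbs dm dp hdm hdp
end
end
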